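/- Let M be an R-module such that Spec^s(M) is a finite set. Then Spec^s(M), with the second classical Zariski topology, is a spectral space; that is, it is a T0-space, it is quasi-compact, its quasi-compact open subsets are closed under finite intersections and form an open basis, and every irreducible closed subset has a generic point. -/

import Mathlib

open Pointwise

variable (R M : Type*) [CommRing R] [AddCommGroup M] [Module R M]

/-- A nonzero submodule `S` is *second* if for every `r : R`, `r • S = S` or `r • S = ⊥`. -/
def IsSecondSubmodule (S : Submodule R M) : Prop :=
  S ≠ ⊥ ∧ ∀ r : R, r • S = S ∨ r • S = ⊥

/-- The second spectrum of `M`: the collection of all second submodules of `M`. -/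
def SecondSpec : Type _ := {S : Submodule R M // IsSecondSubmodule R M S}

/-- `V^{s*}(N)`: the set of second submodules contained in `N`. -/
def Vs (N : Submodule R M) : Set (SecondSpec R M) := {S | S.1 ≤ N}

/-- `W^s(N)`: the complement of `V^{s*}(N)` in `Spec^s(M)`. -/
def Ws (N : Submodule R M) : Set (SecondSpec R M) := (Vs R M N)ᶜ

/-- The second classical Zariski topology on `Spec^s(M)`, generated by the
sub-basis `{W^s(N) : N ≤ M}`. -/
instance secondZariski : TopologicalSpace (SecondSpec R M) :=
  TopologicalSpace.generateFrom {U | ∃ N : Submodule R M, U = Ws R M N}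

/-- The second socle of a submodule `N`: the sum of all second submodules of `M`
contained in `N`. -/
def secSocle (N : Submodule R M) : Submodule R M :=
  sSup {S : Submodule R M | IsSecondSubmodule R M S ∧ S ≤ N}

/-!
Every point `S` lies in the closed set `V^{s*}(S)`, so if two second submodules specialize to
each other they contain each other, and `Spec^s(M)` is T0. A finite T0 space is spectral: all its
subsets are compact, and an irreducible closed set, being the finite union of the closures of its
points, is the closure of one of them.
-/

theorem QuasiSober.of_finite (X : Type*) [TopologicalSpace X] [Finite X] : QuasiSober X where
  sober {S} hS hSc := by
    obtain ⟨_, hz, hSz⟩ := isIrreducible_iff_sUnion_isClosed.mp hS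
      (S.toFinite.image fun x ↦ closure {x}).toFinset
      (by simp only [Set.Finite.mem_toFinset, Set.forall_mem_image]; exact fun _ _ ↦ isClosed_closure)
      (fun x hx ↦ ⟨closure {x}, by simpa using ⟨x, hx, rfl⟩, subset_closure rfl⟩)
    obtain ⟨x, hxS, rfl⟩ := (Set.Finite.mem_toFinset _).mp hz
    exact ⟨x, (closure_minimal (Set.singleton_subset_iff.2 hxS) hSc).antisymm hSz⟩

theorem SpectralSpace.of_finite (X : Type*) [TopologicalSpace X] [Finite X] [T0Space X] :
    SpectralSpace X where
  toQuasiSober := .of_finite X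
  inter_isCompact U V _ _ _ _ := (U ∩ V).toFinite.isCompact

lemma isClosed_vs (N : Submodule R M) : IsClosed (Vs R M N) :=
  isOpen_compl_iff.mp (TopologicalSpace.GenerateOpen.basic _ ⟨N, rfl⟩)

instance : T0Space (SecondSpec R M) := by
  refine t0Space_iff_inseparable _ |>.mpr fun x y hxy ↦ Subtype.ext (le_antisymm ?_ ?_)
  · exact closure_minimal (by simp [Vs]) (isClosed_vs R M y.1) hxy.specializes'.mem_closure
  · exact closure_minimal (by simp [Vs]) (isClosed_vs R M x.1) hxy.specializes.mem_closure

/-- Thm 3.31: if `Spec^s(M)` is finite, then `Spec^s(M)` with the second classical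
Zariski topology is a spectral space (Hochster's characterization): it is T0,
quasi-compact, its quasi-compact open subsets are closed under finite intersections and
form an open basis, and every irreducible closed subset has a generic point. -/
theorem stmt18 (hfin : Finite (SecondSpec R M)) :
    T0Space (SecondSpec R M) ∧
      CompactSpace (SecondSpec R M) ∧
      (∀ U V : Set (SecondSpec R M),
        IsOpen U → IsCompact U → IsOpen V → IsCompact V → IsCompact (U ∩ V)) ∧
      TopologicalSpace.IsTopologicalBasis
        {U : Set (SecondSpec R M) | IsOpen U ∧ IsCompact U} ∧
      (∀ Y : Set (SecondSpec R M), IsIrreducible Y → IsClosed Y →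
        ∃ y, Y = closure {y}) := by
  have := SpectralSpace.of_finite (SecondSpec R M)
  exact ⟨inferInstance, inferInstance, QuasiSeparatedSpace.inter_isCompact,
    PrespectralSpace.isTopologicalBasis,
    fun Y hY hYc ↦ ⟨hY.genericPoint, (hY.closure_genericPoint hYc).symm⟩⟩
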